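/- arXiv:1512.06621 — 3 statements merged into one kernel-verified Lean document; each statement's English description precedes it below -/
import Mathlib

section
/- If T is a densely defined closed right linear operator in a quaternionic Hilbert space H, then its bounded transform Z_T = T(I + T*T)^{-1/2} satisfies N(Z_T) = N(T) and R(Z_T) = R(T). -/
noncomputable section

open MulOpposite

local notation "ℍ" => Quaternion ℝ

variable {H : Type*} [NormedAddCommGroup H] [Module ℍᵐᵒᵖ H]

/-- The axioms of a quaternion-valued inner product compatible with the norm on a
right quaternionic module `H` (scalars act on the right via `ℍᵐᵒᵖ`). -/
structure QInner (inn : H → H → ℍ) : Prop where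
  add_right : ∀ u v w : H, inn u (v + w) = inn u v + inn u w
  smul_right : ∀ (u v : H) (q : ℍ), inn u (op q • v) = inn u v * q
  conj_symm : ∀ u v : H, inn u v = star (inn v u)
  norm_sq : ∀ u : H, inn u u = ((‖u‖ ^ 2 : ℝ) : ℍ)

/-- `B` is the adjoint of the bounded right linear operator `A`. -/
def IsAdjB (inn : H → H → ℍ) (A B : H →L[ℍᵐᵒᵖ] H) : Prop :=
  ∀ x y : H, inn (B x) y = inn x (A y)

/-- `A` is a positive bounded operator. -/
def IsPosB (inn : H → H → ℍ) (A : H →L[ℍᵐᵒᵖ] H) : Prop :=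
  IsAdjB inn A A ∧ ∀ x : H, ∃ r : ℝ, 0 ≤ r ∧ inn x (A x) = (r : ℍ)

/-- Orthogonal complement of a set. -/
def qOrth (inn : H → H → ℍ) (S : Set H) : Set H := {x | ∀ y ∈ S, inn y x = 0}

/-- Null space of a bounded operator. -/
def kerB (A : H →L[ℍᵐᵒᵖ] H) : Set H := {x | A x = 0}

/-- `U` is a partial isometry: it is isometric on `N(U)^⊥`. -/
def IsPartialIsomB (inn : H → H → ℍ) (U : H →L[ℍᵐᵒᵖ] H) : Prop :=
  ∀ x ∈ qOrth inn (kerB U), ‖U x‖ = ‖x‖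

/-- Null space of an unbounded operator. -/
def pKer (T : H →ₗ.[ℍᵐᵒᵖ] H) : Set H := {x | ∃ hx : x ∈ T.domain, T ⟨x, hx⟩ = 0}

/-- Range of an unbounded operator. -/
def pRan (T : H →ₗ.[ℍᵐᵒᵖ] H) : Set H := Set.range fun x : T.domain => T x

/-- `S` is the adjoint of the densely defined operator `T` : the formal adjoint
identity holds and the domain of `S` is maximal. -/
def IsAdjP (inn : H → H → ℍ) (T S : H →ₗ.[ℍᵐᵒᵖ] H) : Prop :=
  (∀ (x : S.domain) (y : T.domain), inn (x : H) (T y) = inn (S x) (y : H)) ∧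
  ∀ x z : H, (∀ y : T.domain, inn x (T y) = inn z (y : H)) → x ∈ S.domain

/-- `T` is a positive (self-adjoint) unbounded operator. -/
def IsPosP (inn : H → H → ℍ) (T : H →ₗ.[ℍᵐᵒᵖ] H) : Prop :=
  IsAdjP inn T T ∧ ∀ x : T.domain, ∃ r : ℝ, 0 ≤ r ∧ inn (x : H) (T x) = (r : ℍ)

/-- `C = S ∘ T` as unbounded operators, with the usual maximal domain. -/
def IsCompP (S T C : H →ₗ.[ℍᵐᵒᵖ] H) : Prop :=
  (∀ x : H, x ∈ C.domain ↔ ∃ hx : x ∈ T.domain, T ⟨x, hx⟩ ∈ S.domain) ∧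
  ∀ (x : C.domain) (hx : (x : H) ∈ T.domain) (h2 : T ⟨x, hx⟩ ∈ S.domain),
    C x = S ⟨T ⟨x, hx⟩, h2⟩

/-- `T = U ∘ P` where `U` is bounded and `T`, `P` are unbounded. -/
def EqCompB (T : H →ₗ.[ℍᵐᵒᵖ] H) (U : H →L[ℍᵐᵒᵖ] H) (P : H →ₗ.[ℍᵐᵒᵖ] H) : Prop :=
  T.domain = P.domain ∧
  ∀ (x : H) (hx : x ∈ T.domain) (hx' : x ∈ P.domain), T ⟨x, hx⟩ = U (P ⟨x, hx'⟩)

/-- The bounded operator `B` commutes with the unbounded operator `T`, i.e. `TB ⊆ BT`. -/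
def CommP (B : H →L[ℍᵐᵒᵖ] H) (T : H →ₗ.[ℍᵐᵒᵖ] H) : Prop :=
  ∀ x : T.domain, ∃ h : B (x : H) ∈ T.domain, T ⟨B (x : H), h⟩ = B (T x)

/-!
For the kernel: `N(T) = N(T*T)`, and `x ∈ N(T*T)` iff `C² x = x`. Since `(I + T*T) C² = I`, the
operator `C` is injective, so `C x ∈ N(T)` iff `C² (C x) = C x` iff `C² x = x` iff `x ∈ N(T)`.

For the range only `dom T ⊆ R(C)` needs proof. Fix `g ∈ dom T` and put `s_n = (I - C²)ⁿ g`, so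
that `C² (s_0 + ⋯ + s_{n-1}) = g - s_n`. For the graph inner product `[x, y] = ⟨x, y⟩ + ⟨T x, T y⟩`
one has `[x, C² v] = ⟨x, v⟩`, hence `[s_a, s_b] = r (a + b)` with `r` antitone and nonnegative, and
`‖C v‖² = [C² v, C² v]`. Therefore `u_n = C (s_0 + ⋯ + s_{n-1})` satisfies
`‖u_n - u_m‖² = [s_n - s_m, s_n - s_m] = r (2n) + r (2m) - 2 r (n + m)` and is Cauchy. Its limit
`w` has `C w = g`: `g - C w = lim s_n` is fixed by `I - C²`, hence killed by the injective `C²`.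
-/

open Filter Topology

namespace QInner

variable {inn : H → H → ℍ}

lemma zero_right (h : QInner inn) (u : H) : inn u 0 = 0 := by
  simpa using h.add_right u 0 0

lemma zero_left (h : QInner inn) (u : H) : inn 0 u = 0 := by
  rw [h.conj_symm, h.zero_right, star_zero]

lemma sub_right (h : QInner inn) (u v w : H) : inn u (v - w) = inn u v - inn u w := by
  rw [eq_sub_iff_add_eq, ← h.add_right, sub_add_cancel]

lemma re_comm (h : QInner inn) (u v : H) : (inn u v).re = (inn v u).re := by
  rw [h.conj_symm, Quaternion.re_star]

lemma re_self (h : QInner inn) (u : H) : (inn u u).re = ‖u‖ ^ 2 := by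
  rw [h.norm_sq, Quaternion.re_coe]

end QInner

def graphReInner (inn : H → H → ℍ) (T : H →ₗ.[ℍᵐᵒᵖ] H) (x y : T.domain) : ℝ :=
  (inn x y).re + (inn (T x) (T y)).re

section GraphReInner

variable {inn : H → H → ℍ} (hinn : QInner inn) {T : H →ₗ.[ℍᵐᵒᵖ] H}
include hinn

lemma graphReInner_comm (x y : T.domain) : graphReInner inn T x y = graphReInner inn T y x := by
  rw [graphReInner, graphReInner, hinn.re_comm, hinn.re_comm (T x)]

lemma graphReInner_self (x : T.domain) :
    graphReInner inn T x x = ‖(x : H)‖ ^ 2 + ‖T x‖ ^ 2 := by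
  rw [graphReInner, hinn.re_self, hinn.re_self]

lemma graphReInner_sub_right (x y z : T.domain) :
    graphReInner inn T x (y - z) = graphReInner inn T x y - graphReInner inn T x z := by
  simp only [graphReInner, Submodule.coe_sub, T.map_sub, hinn.sub_right, Quaternion.re_sub]
  ring

lemma norm_sq_add_norm_sq_sub (x y : T.domain) :
    ‖(x : H) - y‖ ^ 2 + ‖T x - T y‖ ^ 2 =
      graphReInner inn T x x - 2 * graphReInner inn T x y + graphReInner inn T y y := by
  rw [← T.map_sub, ← Submodule.coe_sub, ← graphReInner_self hinn, graphReInner_sub_right hinn,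
    graphReInner_comm hinn (x - y), graphReInner_sub_right hinn, graphReInner_comm hinn (x - y),
    graphReInner_sub_right hinn, graphReInner_comm hinn y x]
  ring

end GraphReInner

lemma eq_apply_zero_add_of_shift {α : Type*} {f : ℕ → ℕ → α}
    (hf : ∀ a b, f (a + 1) b = f a (b + 1)) (a b : ℕ) : f a b = f 0 (a + b) := by
  induction a generalizing b with
  | zero => rw [Nat.zero_add]
  | succ a ih => rw [hf, ih, Nat.succ_add_eq_add_succ]

lemma cauchySeq_of_dist_sq_le {X : Type*} [PseudoMetricSpace X] {v : ℕ → X} {r : ℕ → ℝ}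
    (hr : Antitone r) (hbdd : BddBelow (Set.range r))
    (hv : ∀ n m, dist (v n) (v m) ^ 2 ≤ r (n + n) + r (m + m) - 2 * r (n + m)) :
    CauchySeq v := by
  obtain ⟨L, hL⟩ : ∃ L, Tendsto r atTop (𝓝 L) := ⟨_, tendsto_atTop_ciInf hr hbdd⟩
  rw [cauchySeq_iff_tendsto_dist_atTop_0, ← prod_atTop_atTop_eq]
  have hbound : Tendsto (fun p : ℕ × ℕ => r (p.1 + p.1) + r (p.2 + p.2) - 2 * r (p.1 + p.2))
      (atTop ×ˢ atTop) (𝓝 0) := by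
    have h := ((hL.comp (tendsto_fst.atTop_add_atTop tendsto_fst)).add
      (hL.comp (tendsto_snd.atTop_add_atTop tendsto_snd))).sub
      ((hL.comp (tendsto_fst.atTop_add_atTop tendsto_snd)).const_mul 2)
    rwa [show L + L - 2 * L = 0 by ring] at h
  have hsqrt := (Real.continuous_sqrt.tendsto 0).comp hbound
  rw [Real.sqrt_zero] at hsqrt
  exact squeeze_zero (fun _ => dist_nonneg) (fun p => Real.le_sqrt_of_sq_le (hv p.1 p.2)) hsqrt

lemma IsCompP.domain_le {S T C : H →ₗ.[ℍᵐᵒᵖ] H} (hcomp : IsCompP S T C) :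
    C.domain ≤ T.domain :=
  fun x hx => ((hcomp.1 x).mp hx).1

section AdjointComp

variable {inn : H → H → ℍ} {T Ts TsT : H →ₗ.[ℍᵐᵒᵖ] H}
  (hadj : IsAdjP inn T Ts) (hcomp : IsCompP Ts T TsT)
include hadj hcomp

lemma IsCompP.inner_apply_adjoint (w : TsT.domain) (y : T.domain) :
    inn (TsT w) y = inn (T ⟨w, hcomp.domain_le w.2⟩) (T y) := by
  obtain ⟨hw, hTw⟩ := (hcomp.1 w).mp w.2
  rw [hcomp.2 w hw hTw]
  exact (hadj.1 ⟨_, hTw⟩ y).symm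

lemma pKer_adjoint_comp_self (hinn : QInner inn) : pKer TsT = pKer T := by
  ext x
  constructor
  · rintro ⟨hx, hTsTx⟩
    refine ⟨hcomp.domain_le hx, norm_eq_zero.mp (pow_eq_zero_iff two_ne_zero |>.mp ?_)⟩
    rw [← hinn.re_self, ← hcomp.inner_apply_adjoint hadj ⟨x, hx⟩, hTsTx, hinn.zero_left,
      Quaternion.re_zero]
  · rintro ⟨hx, hTx⟩
    have hTx' : T ⟨x, hx⟩ ∈ Ts.domain := hTx ▸ Ts.domain.zero_mem
    refine ⟨(hcomp.1 x).mpr ⟨hx, hTx'⟩, ?_⟩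
    rw [hcomp.2 ⟨x, _⟩ hx hTx']
    exact (congrArg Ts (Subtype.ext hTx)).trans Ts.map_zero

end AdjointComp

section Resolvent

variable {inn : H → H → ℍ} {T Ts TsT : H →ₗ.[ℍᵐᵒᵖ] H} {C : H →L[ℍᵐᵒᵖ] H}
  {hCdom : ∀ x : H, C (C x) ∈ TsT.domain}

lemma eq_zero_of_apply_apply_eq_zero (hCinv : ∀ x : H, C (C x) + TsT ⟨C (C x), hCdom x⟩ = x)
    {x : H} (hx : C (C x) = 0) : x = 0 :=
  calc x = C (C x) + TsT ⟨C (C x), hCdom x⟩ := (hCinv x).symm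
    _ = 0 + TsT 0 := congrArg₂ (· + ·) hx (congrArg TsT (Subtype.ext hx))
    _ = 0 := by rw [TsT.map_zero, add_zero]

lemma injective_of_sq_rightInverse (hCinv : ∀ x : H, C (C x) + TsT ⟨C (C x), hCdom x⟩ = x) :
    Function.Injective C :=
  (injective_iff_map_eq_zero C).mpr fun x hx =>
    eq_zero_of_apply_apply_eq_zero hCinv (by rw [hx, map_zero])

lemma mem_pKer_iff_apply_apply_eq (hCinv : ∀ x : H, C (C x) + TsT ⟨C (C x), hCdom x⟩ = x)
    (hCinv' : ∀ x : TsT.domain, C (C ((x : H) + TsT x)) = (x : H)) {x : H} :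
    x ∈ pKer TsT ↔ C (C x) = x := by
  constructor
  · rintro ⟨hx, hTsTx⟩
    simpa [hTsTx] using hCinv' ⟨x, hx⟩
  · intro hx
    refine ⟨hx ▸ hCdom x, ?_⟩
    calc TsT ⟨x, _⟩ = TsT ⟨C (C x), hCdom x⟩ := congrArg TsT (Subtype.ext hx.symm)
      _ = x - C (C x) := eq_sub_of_add_eq' (hCinv x)
      _ = 0 := by rw [hx, sub_self]

variable (hinn : QInner inn) (hadj : IsAdjP inn T Ts) (hcomp : IsCompP Ts T TsT)
  (hCinv : ∀ x : H, C (C x) + TsT ⟨C (C x), hCdom x⟩ = x)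
include hinn hadj hcomp hCinv

lemma graphReInner_apply_apply (u : T.domain) (v : H) (hv : C (C v) ∈ T.domain) :
    graphReInner inn T u ⟨C (C v), hv⟩ = (inn u v).re := by
  have hT : (inn (T u) (T ⟨C (C v), hv⟩)).re = (inn u (TsT ⟨C (C v), hCdom v⟩)).re := by
    rw [hinn.re_comm u, hinn.re_comm (T u)]
    exact congrArg _ (hcomp.inner_apply_adjoint hadj ⟨C (C v), hCdom v⟩ u).symm
  rw [graphReInner, hT, ← Quaternion.re_add, ← hinn.add_right, hCinv]

lemma norm_sq_apply_eq_graph_norm_sq (hCadj : IsAdjB inn C C) (v : H) (hv : C (C v) ∈ T.domain) :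
    ‖C v‖ ^ 2 = ‖C (C v)‖ ^ 2 + ‖T ⟨C (C v), hv⟩‖ ^ 2 := by
  rw [← hinn.re_self, hCadj, hinn.re_comm,
    ← graphReInner_apply_apply hinn hadj hcomp hCinv ⟨C (C v), hv⟩ v hv, graphReInner_self hinn]

lemma re_inner_sub_apply_apply_nonneg (v : H) : 0 ≤ (inn (v - C (C v)) v).re := by
  set y : TsT.domain := ⟨C (C v), hCdom v⟩
  have hv : v - C (C v) = TsT y := (eq_sub_of_add_eq' (hCinv v)).symm
  calc 0 ≤ ‖T ⟨y, hcomp.domain_le y.2⟩‖ ^ 2 + ‖TsT y‖ ^ 2 := by positivity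
    _ = (inn (TsT y) y + inn (TsT y) (TsT y)).re := by
      rw [Quaternion.re_add, hcomp.inner_apply_adjoint hadj y ⟨y, hcomp.domain_le y.2⟩,
        hinn.re_self, hinn.re_self]
    _ = (inn (v - C (C v)) v).re := by rw [← hinn.add_right, hCinv, hv]

end Resolvent

def oneSubSqRestrict (C : H →L[ℍᵐᵒᵖ] H) {T : H →ₗ.[ℍᵐᵒᵖ] H} (hCT : ∀ v, C (C v) ∈ T.domain)
    (x : T.domain) : T.domain :=
  x - ⟨C (C x), hCT x⟩

section Iterates

variable {inn : H → H → ℍ} {T Ts TsT : H →ₗ.[ℍᵐᵒᵖ] H} {C : H →L[ℍᵐᵒᵖ] H}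
  {hCdom : ∀ x : H, C (C x) ∈ TsT.domain} (hinn : QInner inn) (hadj : IsAdjP inn T Ts)
  (hcomp : IsCompP Ts T TsT) (hCinv : ∀ x : H, C (C x) + TsT ⟨C (C x), hCdom x⟩ = x)
  (hCT : ∀ v, C (C v) ∈ T.domain)
include hinn hadj hcomp hCinv

lemma graphReInner_oneSubSqRestrict (x y : T.domain) :
    graphReInner inn T x (oneSubSqRestrict C hCT y) = graphReInner inn T x y - (inn x y).re := by
  rw [oneSubSqRestrict, graphReInner_sub_right hinn,
    graphReInner_apply_apply hinn hadj hcomp hCinv]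

lemma graphReInner_iterate (g : T.domain) (a b : ℕ) :
    graphReInner inn T ((oneSubSqRestrict C hCT)^[a] g) ((oneSubSqRestrict C hCT)^[b] g) =
      graphReInner inn T g ((oneSubSqRestrict C hCT)^[a + b] g) := by
  refine eq_apply_zero_add_of_shift (f := fun a b => graphReInner inn T
    ((oneSubSqRestrict C hCT)^[a] g) ((oneSubSqRestrict C hCT)^[b] g)) (fun a b => ?_) a b
  simp only [Function.iterate_succ_apply']
  rw [graphReInner_comm hinn, graphReInner_oneSubSqRestrict hinn hadj hcomp hCinv,
    graphReInner_oneSubSqRestrict hinn hadj hcomp hCinv, graphReInner_comm hinn, hinn.re_comm]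

lemma antitone_graphReInner_iterate (g : T.domain) :
    Antitone fun k => graphReInner inn T g ((oneSubSqRestrict C hCT)^[k] g) := by
  set s := fun n => (oneSubSqRestrict C hCT)^[n] g
  have hstep : ∀ a b, graphReInner inn T g (s (a + (b + 1))) =
      graphReInner inn T g (s (a + b)) - (inn (s a) (s b)).re := fun a b => by
    rw [← graphReInner_iterate hinn hadj hcomp hCinv, ← graphReInner_iterate hinn hadj hcomp hCinv,
      Function.iterate_succ_apply', graphReInner_oneSubSqRestrict hinn hadj hcomp hCinv]
  refine antitone_nat_of_succ_le fun k => ?_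
  obtain ⟨j, rfl | rfl⟩ := Nat.even_or_odd' k
  · have h := hstep j j
    rw [hinn.re_self] at h
    simp only [two_mul, ← add_assoc] at h ⊢
    linarith [sq_nonneg ‖(s j : H)‖]
  · have h := hstep (j + 1) j
    have hs : (s (j + 1) : H) = s j - C (C (s j)) := by
      simp only [s, Function.iterate_succ_apply', oneSubSqRestrict, Submodule.coe_sub]
    have hnn := re_inner_sub_apply_apply_nonneg hinn hadj hcomp hCinv (s j)
    rw [← hs] at hnn
    rw [show j + 1 + (j + 1) = 2 * j + 1 + 1 by omega, show j + 1 + j = 2 * j + 1 by omega] at h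
    linarith

lemma graphReInner_iterate_nonneg (g : T.domain) (k : ℕ) :
    0 ≤ graphReInner inn T g ((oneSubSqRestrict C hCT)^[k] g) := by
  set s := fun n => (oneSubSqRestrict C hCT)^[n] g
  calc 0 ≤ ‖T (s k)‖ ^ 2 := by positivity
    _ = graphReInner inn T g (s (k + (k + 1))) := by
      rw [← graphReInner_iterate hinn hadj hcomp hCinv, Function.iterate_succ_apply',
        graphReInner_oneSubSqRestrict hinn hadj hcomp hCinv, graphReInner_self hinn, hinn.re_self]
      ring
    _ ≤ graphReInner inn T g (s k) :=
      antitone_graphReInner_iterate hinn hadj hcomp hCinv hCT g (by omega)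

lemma exists_apply_eq_of_mem_domain [CompleteSpace H] (hCadj : IsAdjB inn C C) (g : T.domain) :
    ∃ w, C w = g := by
  have hCT : ∀ v, C (C v) ∈ T.domain := fun v => hcomp.domain_le (hCdom v)
  set s := fun n => (oneSubSqRestrict C hCT)^[n] g
  set r := fun k => graphReInner inn T g (s k)
  have hs : ∀ n, C (C (s n)) = s n - s (n + 1) := fun n => by
    simp only [s, Function.iterate_succ_apply', oneSubSqRestrict, Submodule.coe_sub,
      sub_sub_cancel]
  set u := fun n => C (∑ k ∈ Finset.range n, (s k : H))
  have hCu : ∀ n, C (u n) = g - s n := fun n => by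
    simp only [u, map_sum, hs]
    exact Finset.sum_range_sub' _ n
  have hdist : ∀ n m, dist (u n) (u m) ^ 2 ≤ r (n + n) + r (m + m) - 2 * r (n + m) := by
    intro n m
    set σ := ∑ k ∈ Finset.range n, (s k : H) - ∑ k ∈ Finset.range m, (s k : H)
    have hCCσ : C (C σ) = ((s m - s n : T.domain) : H) := by
      rw [map_sub, map_sub]
      change C (u n) - C (u m) = _
      rw [hCu, hCu, Submodule.coe_sub]
      abel
    have hTσ : T ⟨C (C σ), hCT σ⟩ = T (s m - s n) := congrArg T (Subtype.ext hCCσ)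
    rw [dist_eq_norm, ← map_sub,
      norm_sq_apply_eq_graph_norm_sq hinn hadj hcomp hCinv hCadj σ (hCT σ), hTσ, hCCσ,
      T.map_sub, Submodule.coe_sub, norm_sq_add_norm_sq_sub hinn,
      graphReInner_iterate hinn hadj hcomp hCinv, graphReInner_iterate hinn hadj hcomp hCinv,
      graphReInner_iterate hinn hadj hcomp hCinv, add_comm m n]
    linarith
  obtain ⟨w, hw⟩ := cauchySeq_tendsto_of_complete <| cauchySeq_of_dist_sq_le
    (antitone_graphReInner_iterate hinn hadj hcomp hCinv hCT g)
    ⟨0, Set.forall_mem_range.mpr (graphReInner_iterate_nonneg hinn hadj hcomp hCinv hCT g)⟩ hdist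
  have hlim : Tendsto (fun n => (s n : H)) atTop (𝓝 (g - C w)) := by
    have h := tendsto_const_nhds (x := (g : H)) |>.sub ((C.continuous.tendsto w).comp hw)
    simpa only [Function.comp_def, hCu, sub_sub_cancel] using h
  have hlim' : Tendsto (fun n => (s (n + 1) : H)) atTop (𝓝 (g - C w - C (C (g - C w)))) := by
    have hs' : ∀ n, (s (n + 1) : H) = s n - C (C (s n)) := fun n => by rw [hs, sub_sub_cancel]
    simp only [hs']
    exact hlim.sub (((C.continuous.comp C.continuous).tendsto _).comp hlim)
  have hCC : C (C (g - C w)) = 0 :=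
    sub_eq_self.mp (tendsto_nhds_unique (hlim.comp (tendsto_add_atTop_nat 1)) hlim').symm
  exact ⟨w, (sub_eq_zero.mp (eq_zero_of_apply_apply_eq_zero hCinv hCC)).symm⟩

end Iterates

/-- `Ts = T*`, `TsT = T*T`, and `C` is the positive square root of `(I + T*T)⁻¹`. -/
theorem boundedTransform_ker_and_ran_general
    [CompleteSpace H] (inn : H → H → ℍ) (hinn : QInner inn)
    (T Ts TsT : H →ₗ.[ℍᵐᵒᵖ] H) (Z C : H →L[ℍᵐᵒᵖ] H)
    (hadj : IsAdjP inn T Ts) (hcomp : IsCompP Ts T TsT)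
    (hCpos : IsPosB inn C)
    (hCdom : ∀ x : H, C (C x) ∈ TsT.domain)
    (hCinv : ∀ x : H, C (C x) + TsT ⟨C (C x), hCdom x⟩ = x)
    (hCinv' : ∀ x : TsT.domain, C (C ((x : H) + TsT x)) = (x : H))
    (hZ : ∀ x : H, ∃ h : C x ∈ T.domain, Z x = T ⟨C x, h⟩) :
    kerB Z = pKer T ∧ Set.range Z = pRan T := by
  have hker : ∀ x, x ∈ pKer T ↔ C (C x) = x := fun x => by
    rw [← pKer_adjoint_comp_self hadj hcomp hinn, mem_pKer_iff_apply_apply_eq hCinv hCinv']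
  refine ⟨Set.ext fun x => ?_, Set.Subset.antisymm ?_ ?_⟩
  · obtain ⟨hx, hZx⟩ := hZ x
    calc x ∈ kerB Z ↔ C x ∈ pKer T := by simp [kerB, pKer, hZx, hx]
      _ ↔ C (C (C x)) = C x := hker (C x)
      _ ↔ C (C x) = x := (injective_of_sq_rightInverse hCinv).eq_iff
      _ ↔ x ∈ pKer T := (hker x).symm
  · rintro _ ⟨x, rfl⟩
    obtain ⟨hx, hZx⟩ := hZ x
    exact ⟨⟨C x, hx⟩, hZx.symm⟩
  · rintro _ ⟨g, rfl⟩
    obtain ⟨w, hw⟩ := exists_apply_eq_of_mem_domain hinn hadj hcomp hCinv hCpos.1 g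
    obtain ⟨_, hZw⟩ := hZ w
    exact ⟨w, hZw.trans (congrArg T (Subtype.ext hw))⟩

/-- the bounded transform `Z_T = T (I + T*T)^{-1/2}` of a densely defined
closed right linear operator `T` satisfies `N(Z_T) = N(T)` and `R(Z_T) = R(T)`.
Here `Ts = T*`, `TsT = T*T`, and `C` is the positive square root of `(I + T*T)⁻¹`,
so that `Z x = T (C x)`. -/
theorem boundedTransform_ker_and_ran
    [CompleteSpace H] (inn : H → H → ℍ) (hinn : QInner inn)
    (T Ts TsT : H →ₗ.[ℍᵐᵒᵖ] H) (Z C : H →L[ℍᵐᵒᵖ] H)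
    (hdense : Dense (T.domain : Set H))
    (hclosed : IsClosed (T.graph : Set (H × H)))
    (hadj : IsAdjP inn T Ts) (hcomp : IsCompP Ts T TsT)
    (hCpos : IsPosB inn C)
    (hCdom : ∀ x : H, C (C x) ∈ TsT.domain)
    (hCinv : ∀ x : H, C (C x) + TsT ⟨C (C x), hCdom x⟩ = x)
    (hCinv' : ∀ x : TsT.domain, C (C ((x : H) + TsT x)) = (x : H))
    (hZ : ∀ x : H, ∃ h : C x ∈ T.domain, Z x = T ⟨C x, h⟩) :
    kerB Z = pKer T ∧ Set.range Z = pRan T :=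
  boundedTransform_ker_and_ran_general inn hinn T Ts TsT Z C hadj hcomp hCpos hCdom hCinv hCinv' hZ
end
end

section
/- Let H be a quaternionic Hilbert space, J an anti self-adjoint unitary operator, m ∈ S a fixed imaginary unit, and A = A₁ + A₂·n a bounded right linear operator decomposed via the slice Hilbert space H₊ = H₊^{Jm}. Then the map χ_A : H₊ ⊕ H₊ → H₊ ⊕ H₊ given by the 2×2 matrix [[A₁, A₂], [−conj(A₂), conj(A₁)]] is a bounded C_m-linear operator with ‖χ_A‖ = ‖A‖. -/
noncomputable section

open MulOpposite

local notation "ℍ" => Quaternion ℝ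

variable {H : Type*} [NormedAddCommGroup H] [Module ℍᵐᵒᵖ H]

/-- The slice Hilbert space `H₊^{Jm} = {x ∈ H : Jx = x·m}`. -/
def Hplus (J : H →L[ℍᵐᵒᵖ] H) (m : ℍ) : Set H := {x | J x = op m • x}

/-- Pairs with both components in the slice `H₊^{Jm}` (the space `H₊ ⊕ H₊`). -/
def Hplus2 (J : H →L[ℍᵐᵒᵖ] H) (m : ℍ) : Set (H × H) :=
  {p | p.1 ∈ Hplus J m ∧ p.2 ∈ Hplus J m}

/-- The `ℂ_m`-valued inner product on `H₊ ⊕ H₊`. -/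
def innP (inn : H → H → ℍ) (p q : H × H) : ℍ := inn p.1 q.1 + inn p.2 q.2

/-- The Hilbert space norm on `H₊ ⊕ H₊`. -/
def normP (p : H × H) : ℝ := Real.sqrt (‖p.1‖ ^ 2 + ‖p.2‖ ^ 2)

/-- `cj` is a conjugation of the slice `H₊^{Jm}` (e.g. the one induced by an
orthonormal basis of `H₊^{Jm}`): an additive, `ℂ_m`-antilinear, isometric involution. -/
structure IsSliceConj (inn : H → H → ℍ) (J : H →L[ℍᵐᵒᵖ] H) (m : ℍ) (cj : H → H) : Prop where
  mem : ∀ x ∈ Hplus J m, cj x ∈ Hplus J m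
  add : ∀ x y : H, cj (x + y) = cj x + cj y
  invol : ∀ x : H, cj (cj x) = x
  antilinear : ∀ x : H, cj (op m • x) = -(op m • cj x)
  inner : ∀ x ∈ Hplus J m, ∀ y ∈ Hplus J m, inn (cj x) (cj y) = inn y x

/-- `A = A₁ + A₂ · n` : the bounded right linear operator `A` decomposes along the slice
`H₊^{Jm}` into the pair of bounded `ℂ_m`-linear operators `A₁, A₂` on `H₊^{Jm}`. -/
structure IsSliceDecomp (inn : H → H → ℍ) (J : H →L[ℍᵐᵒᵖ] H) (m n : ℍ) (cj : H → H)
    (A : H →L[ℍᵐᵒᵖ] H) (A₁ A₂ : H → H) : Prop where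
  mem₁ : ∀ x ∈ Hplus J m, A₁ x ∈ Hplus J m
  mem₂ : ∀ x ∈ Hplus J m, A₂ x ∈ Hplus J m
  add₁ : ∀ x y : H, A₁ (x + y) = A₁ x + A₁ y
  add₂ : ∀ x y : H, A₂ (x + y) = A₂ x + A₂ y
  lin₁ : ∀ x : H, A₁ (op m • x) = op m • A₁ x
  lin₂ : ∀ x : H, A₂ (op m • x) = op m • A₂ x
  decomp : ∀ x ∈ Hplus J m, A x = A₁ x + op n • A₂ (cj x)

/-- The operator matrix `χ_A = [[A₁, A₂], [-conj(A₂), conj(A₁)]]` acting on `H₊ ⊕ H₊`,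
where `conj(B) = cj ∘ B ∘ cj`. -/
def chi (cj A₁ A₂ : H → H) (p : H × H) : H × H :=
  (A₁ p.1 + A₂ p.2, -(cj (A₂ (cj p.1))) + cj (A₁ (cj p.2)))

/-- The standing assumptions of the slice decomposition: `J` is anti self-adjoint and
unitary, `m, n` are anticommuting imaginary units, and `H = H₊ ⊕ H₊·n`. -/
structure SliceSetup (inn : H → H → ℍ) (J : H →L[ℍᵐᵒᵖ] H) (m n : ℍ) : Prop where
  Jadj : IsAdjB inn J (-J)
  Junit : J.comp J = -1
  m_im : m.re = 0
  m_norm : ‖m‖ = 1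
  n_im : n.re = 0
  n_norm : ‖n‖ = 1
  anticomm : m * n = -(n * m)
  split : ∀ x : H, ∃ x₁ ∈ Hplus J m, ∃ x₂ ∈ Hplus J m, x = x₁ + op n • x₂
  split_unique : ∀ x₁ ∈ Hplus J m, ∀ x₂ ∈ Hplus J m,
    x₁ + op n • x₂ = 0 → x₁ = 0 ∧ x₂ = 0

/-! The slice decomposition `H = H₊ ⊕ H₊·n` is orthogonal: for `x, y ∈ H₊` the quaternion
`⟪x, y⟫` commutes with `m`, so `⟪x, y⟫ n` anticommutes with `m` and has real part zero.
Hence `(x₁, x₂) ↦ x₁ - conj(x₂)·n` is an isometry of `H₊ ⊕ H₊` onto `H`, and a direct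
computation from `A = A₁ + A₂·n` shows that it carries `χ_A` to `A`. Conjugate operators
admit the same bounds. -/

theorem forall_le_mul_iff_of_semiconj {X Y : Type*} {S : Set X} {U : X → Y} {T : X → X}
    {B : Y → Y} (nX : X → ℝ) (nY : Y → ℝ) (hU : ∀ p ∈ S, nY (U p) = nX p)
    (hsurj : Set.SurjOn U S Set.univ) (hT : Set.MapsTo T S S)
    (hBU : ∀ p ∈ S, B (U p) = U (T p)) (c : ℝ) :
    (∀ p ∈ S, nX (T p) ≤ c * nX p) ↔ ∀ y, nY (B y) ≤ c * nY y := by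
  constructor
  · intro h y
    obtain ⟨p, hp, rfl⟩ := hsurj (Set.mem_univ y)
    rw [hBU p hp, hU _ (hT hp), hU p hp]
    exact h p hp
  · intro h p hp
    rw [← hU _ (hT hp), ← hU p hp, ← hBU p hp]
    exact h _

namespace Quaternion

theorem mul_self_eq_neg_one {q : ℍ[ℝ]} (hre : q.re = 0) (hnorm : ‖q‖ = 1) : q * q = -1 := by
  rw [← sq, sq_eq_neg_normSq.mpr hre, normSq_eq_norm_mul_self, hnorm, mul_one, coe_one]

theorem re_eq_zero_of_mul_eq_neg_mul {m q : ℍ[ℝ]} (hm : m * m = -1)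
    (h : m * q = -(q * m)) : q.re = 0 := by
  have h₁ : m * (m * q) = -q := by rw [← mul_assoc, hm, neg_one_mul]
  have h₂ : m * q * m = q := by rw [h, neg_mul, mul_assoc, hm, mul_neg_one, neg_neg]
  have key : (m * (m * q)).re = (m * q * m).re := by simp only [re_mul]; ring
  rw [h₁, h₂, re_neg] at key
  linarith

end Quaternion

namespace QInner

variable {inn : H → H → ℍ} (hinn : QInner inn)
include hinn

theorem neg_right (u v : H) : inn u (-v) = -inn u v :=
  map_neg (AddMonoidHom.mk' (inn u) (hinn.add_right u)) v

theorem add_left (u v w : H) : inn (u + v) w = inn u w + inn v w := by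
  rw [hinn.conj_symm, hinn.add_right, star_add, ← hinn.conj_symm, ← hinn.conj_symm]

theorem neg_left (u v : H) : inn (-u) v = -inn u v := by
  rw [hinn.conj_symm, hinn.neg_right, star_neg, ← hinn.conj_symm]

theorem smul_left (u v : H) (q : ℍ) : inn (op q • u) v = star q * inn u v := by
  rw [hinn.conj_symm, hinn.smul_right, star_mul, ← hinn.conj_symm]

theorem norm_eq_of_inner_self_eq {u v : H} (h : inn u u = inn v v) : ‖u‖ = ‖v‖ := by
  rw [hinn.norm_sq, hinn.norm_sq] at h
  exact (pow_left_inj₀ (norm_nonneg u) (norm_nonneg v) two_ne_zero).mp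
    (Quaternion.coe_injective h)

theorem norm_add_sq (u v : H) : ‖u + v‖ ^ 2 = ‖u‖ ^ 2 + ‖v‖ ^ 2 + 2 * (inn u v).re := by
  have h := congrArg QuaternionAlgebra.re (hinn.norm_sq (u + v))
  rw [hinn.add_left, hinn.add_right, hinn.add_right, hinn.norm_sq u, hinn.norm_sq v,
    hinn.conj_symm v u] at h
  simp only [Quaternion.re_add, Quaternion.re_coe, Quaternion.re_star] at h
  linarith

theorem norm_smul_of_norm_eq_one {q : ℍ} (hq : ‖q‖ = 1) (v : H) :
    ‖op q • v‖ = ‖v‖ := by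
  refine hinn.norm_eq_of_inner_self_eq ?_
  rw [hinn.smul_left, hinn.smul_right, hinn.norm_sq, Quaternion.coe_commutes, ← mul_assoc,
    Quaternion.star_mul_self, Quaternion.normSq_eq_norm_mul_self, hq, mul_one,
    Quaternion.coe_one, one_mul]

end QInner

section Slice

variable {inn : H → H → ℍ} {J : H →L[ℍᵐᵒᵖ] H} {m n : ℍ} {cj : H → H}

theorem add_mem_Hplus {x y : H} (hx : x ∈ Hplus J m) (hy : y ∈ Hplus J m) :
    x + y ∈ Hplus J m := by
  simp only [Hplus, Set.mem_ofPred_eq, map_add, smul_add] at hx hy ⊢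
  rw [hx, hy]

theorem neg_mem_Hplus {x : H} (hx : x ∈ Hplus J m) : -x ∈ Hplus J m := by
  simp only [Hplus, Set.mem_ofPred_eq, map_neg, smul_neg] at hx ⊢
  rw [hx]

theorem QInner.mul_comm_of_mem_Hplus (hinn : QInner inn) (hJ : IsAdjB inn J (-J))
    (hm : m.re = 0) {x y : H} (hx : x ∈ Hplus J m) (hy : y ∈ Hplus J m) :
    inn x y * m = m * inn x y :=
  calc inn x y * m = inn x (J y) := by rw [hy, hinn.smul_right]
    _ = -inn (J x) y := by rw [← hJ, neg_apply, hinn.neg_left]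
    _ = m * inn x y := by
      rw [hx, hinn.smul_left, Quaternion.star_eq_neg.mpr hm, neg_mul, neg_neg]

theorem QInner.norm_add_smul_sq (hinn : QInner inn) (hslice : SliceSetup inn J m n)
    {x y : H} (hx : x ∈ Hplus J m) (hy : y ∈ Hplus J m) :
    ‖x + op n • y‖ ^ 2 = ‖x‖ ^ 2 + ‖y‖ ^ 2 := by
  have hm2 := Quaternion.mul_self_eq_neg_one hslice.m_im hslice.m_norm
  have hcomm := hinn.mul_comm_of_mem_Hplus hslice.Jadj hslice.m_im hx hy
  have horth : (inn x y * n).re = 0 := by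
    refine Quaternion.re_eq_zero_of_mul_eq_neg_mul hm2 ?_
    rw [← mul_assoc, ← hcomm, mul_assoc, hslice.anticomm, mul_neg, ← mul_assoc]
  rw [hinn.norm_add_sq, hinn.norm_smul_of_norm_eq_one hslice.n_norm, hinn.smul_right, horth,
    mul_zero, add_zero]

theorem IsSliceConj.norm_eq (hinn : QInner inn) (hcj : IsSliceConj inn J m cj) {x : H}
    (hx : x ∈ Hplus J m) : ‖cj x‖ = ‖x‖ :=
  hinn.norm_eq_of_inner_self_eq (hcj.inner x hx x hx)

theorem IsSliceConj.map_neg (hcj : IsSliceConj inn J m cj) (x : H) : cj (-x) = -cj x :=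
  _root_.map_neg (AddMonoidHom.mk' cj hcj.add) x

def fromSlicePair (n : ℍ) (cj : H → H) (p : H × H) : H := p.1 - op n • cj p.2

theorem norm_fromSlicePair (hinn : QInner inn) (hslice : SliceSetup inn J m n)
    (hcj : IsSliceConj inn J m cj) {p : H × H} (hp : p ∈ Hplus2 J m) :
    ‖fromSlicePair n cj p‖ = normP p := by
  rw [normP, ← hcj.norm_eq hinn hp.2, ← norm_neg (cj p.2),
    ← hinn.norm_add_smul_sq hslice hp.1 (neg_mem_Hplus (hcj.mem _ hp.2)), Real.sqrt_sq (norm_nonneg _),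
    fromSlicePair, sub_eq_add_neg, smul_neg]

theorem fromSlicePair_surjOn (hslice : SliceSetup inn J m n) (hcj : IsSliceConj inn J m cj) :
    Set.SurjOn (fromSlicePair n cj) (Hplus2 J m) Set.univ := by
  intro x _
  obtain ⟨x₁, h₁, x₂, h₂, rfl⟩ := hslice.split x
  refine ⟨(x₁, -cj x₂), ⟨h₁, neg_mem_Hplus (hcj.mem _ h₂)⟩, ?_⟩
  rw [fromSlicePair, hcj.map_neg, hcj.invol, smul_neg, sub_neg_eq_add]

variable {A : H →L[ℍᵐᵒᵖ] H} {A₁ A₂ : H → H}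

theorem chi_mapsTo (hcj : IsSliceConj inn J m cj) (hdec : IsSliceDecomp inn J m n cj A A₁ A₂) :
    Set.MapsTo (chi cj A₁ A₂) (Hplus2 J m) (Hplus2 J m) := by
  rintro p ⟨hp₁, hp₂⟩
  exact ⟨add_mem_Hplus (hdec.mem₁ _ hp₁) (hdec.mem₂ _ hp₂),
    add_mem_Hplus (neg_mem_Hplus (hcj.mem _ (hdec.mem₂ _ (hcj.mem _ hp₁))))
      (hcj.mem _ (hdec.mem₁ _ (hcj.mem _ hp₂)))⟩

theorem chi_add (hcj : IsSliceConj inn J m cj) (hdec : IsSliceDecomp inn J m n cj A A₁ A₂)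
    (p q : H × H) : chi cj A₁ A₂ (p + q) = chi cj A₁ A₂ p + chi cj A₁ A₂ q := by
  simp only [chi, Prod.fst_add, Prod.snd_add, hdec.add₁, hdec.add₂, hcj.add, Prod.mk_add_mk,
    Prod.mk.injEq]
  constructor <;> abel

theorem chi_smul (hcj : IsSliceConj inn J m cj) (hdec : IsSliceDecomp inn J m n cj A A₁ A₂)
    (p : H × H) : chi cj A₁ A₂ (op m • p.1, op m • p.2)
      = (op m • (chi cj A₁ A₂ p).1, op m • (chi cj A₁ A₂ p).2) := by
  have hA₁ : ∀ x, A₁ (-x) = -A₁ x := map_neg (AddMonoidHom.mk' A₁ hdec.add₁)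
  have hA₂ : ∀ x, A₂ (-x) = -A₂ x := map_neg (AddMonoidHom.mk' A₂ hdec.add₂)
  simp only [chi, hcj.antilinear, hcj.map_neg, hA₁, hA₂, hdec.lin₁, hdec.lin₂, smul_add,
    smul_neg, neg_neg]

theorem map_fromSlicePair (hslice : SliceSetup inn J m n) (hcj : IsSliceConj inn J m cj)
    (hdec : IsSliceDecomp inn J m n cj A A₁ A₂) {p : H × H} (hp : p ∈ Hplus2 J m) :
    A (fromSlicePair n cj p) = fromSlicePair n cj (chi cj A₁ A₂ p) := by
  have hn2 := Quaternion.mul_self_eq_neg_one hslice.n_im hslice.n_norm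
  have hnn : ∀ v : H, op n • op n • v = -v := fun v => by
    rw [smul_smul, ← op_mul, hn2, op_neg, op_one, neg_smul, one_smul]
  rw [fromSlicePair, fromSlicePair, chi, map_sub, map_smul, hdec.decomp _ hp.1,
    hdec.decomp _ (hcj.mem _ hp.2), hcj.add, hcj.map_neg, hcj.invol, hcj.invol, hcj.invol]
  simp only [smul_add, smul_neg, hnn]
  abel

end Slice

theorem chi_bounded_linear_norm_eq_general
    (inn : H → H → ℍ) (hinn : QInner inn)
    (J : H →L[ℍᵐᵒᵖ] H) (m n : ℍ) (hslice : SliceSetup inn J m n)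
    (cj : H → H) (hcj : IsSliceConj inn J m cj)
    (A : H →L[ℍᵐᵒᵖ] H) (A₁ A₂ : H → H)
    (hdec : IsSliceDecomp inn J m n cj A A₁ A₂) :
    (∀ p ∈ Hplus2 J m, chi cj A₁ A₂ p ∈ Hplus2 J m) ∧
    (∀ p q : H × H, chi cj A₁ A₂ (p + q) = chi cj A₁ A₂ p + chi cj A₁ A₂ q) ∧
    (∀ p : H × H, chi cj A₁ A₂ (op m • p.1, op m • p.2)
        = (op m • (chi cj A₁ A₂ p).1, op m • (chi cj A₁ A₂ p).2)) ∧
    (∀ c : ℝ, 0 ≤ c →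
      ((∀ p ∈ Hplus2 J m, normP (chi cj A₁ A₂ p) ≤ c * normP p) ↔
        ∀ x : H, ‖A x‖ ≤ c * ‖x‖)) :=
  ⟨chi_mapsTo hcj hdec, chi_add hcj hdec, chi_smul hcj hdec, fun c _ =>
    forall_le_mul_iff_of_semiconj normP norm (fun _ hp => norm_fromSlicePair hinn hslice hcj hp)
      (fromSlicePair_surjOn hslice hcj) (chi_mapsTo hcj hdec)
      (fun _ hp => map_fromSlicePair hslice hcj hdec hp) c⟩

/-- for `A = A₁ + A₂·n ∈ B(H)`, the operator matrix
`χ_A = [[A₁, A₂], [-conj(A₂), conj(A₁)]]` is a bounded `ℂ_m`-linear operator on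
`H₊ ⊕ H₊` with `‖χ_A‖ = ‖A‖` (the norm equality is expressed by saying that the two
operators admit exactly the same bounds `c`). -/
theorem chi_bounded_linear_norm_eq
    [CompleteSpace H] (inn : H → H → ℍ) (hinn : QInner inn)
    (J : H →L[ℍᵐᵒᵖ] H) (m n : ℍ) (hslice : SliceSetup inn J m n)
    (cj : H → H) (hcj : IsSliceConj inn J m cj)
    (A : H →L[ℍᵐᵒᵖ] H) (A₁ A₂ : H → H)
    (hdec : IsSliceDecomp inn J m n cj A A₁ A₂) :
    (∀ p ∈ Hplus2 J m, chi cj A₁ A₂ p ∈ Hplus2 J m) ∧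
    (∀ p q : H × H, chi cj A₁ A₂ (p + q) = chi cj A₁ A₂ p + chi cj A₁ A₂ q) ∧
    (∀ p : H × H, chi cj A₁ A₂ (op m • p.1, op m • p.2)
        = (op m • (chi cj A₁ A₂ p).1, op m • (chi cj A₁ A₂ p).2)) ∧
    (∀ c : ℝ, 0 ≤ c →
      ((∀ p ∈ Hplus2 J m, normP (chi cj A₁ A₂ p) ≤ c * normP p) ↔
        ∀ x : H, ‖A x‖ ≤ c * ‖x‖)) :=
  chi_bounded_linear_norm_eq_general inn hinn J m n hslice cj hcj A A₁ A₂ hdec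
end
end

section
/- For a bounded right linear operator A on a quaternionic Hilbert space with associated complex operator matrix χ_A, one has χ_{A*} = (χ_A)*; consequently A is self-adjoint (resp. positive, normal, unitary, anti self-adjoint) if and only if χ_A is self-adjoint (resp. positive, normal, unitary, anti self-adjoint). -/
noncomputable section

open MulOpposite

local notation "ℍ" => Quaternion ℝ

variable {H : Type*} [NormedAddCommGroup H] [Module ℍᵐᵒᵖ H]

/-!
The map `(p₁, p₂) ↦ p₁ - conj(p₂) n` is a bijection `H₊ ⊕ H₊ → H` which intertwines `χ_A`
with `A` and pulls the `ℂ_m`-part of the quaternionic inner product back to `innP`. A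
quaternion `c` is determined by the `ℂ_m`-parts of `c` and `c n`, and right linearity gives
`⟨x, A y⟩ n = ⟨x, A (y n)⟩`; so an adjointness relation holds for `A` as soon as it holds for
`ℂ_m`-parts, i.e. for `χ_A`. Identities between compositions transfer through the bijection.
-/

theorem Quaternion.mul_self_eq_neg_one_s13 {q : ℍ} (hre : q.re = 0) (hq : ‖q‖ = 1) : q * q = -1 := by
  rw [← sq, Quaternion.sq_eq_neg_normSq.mpr hre, Quaternion.normSq_eq_norm_mul_self, hq]
  norm_num

/-- Applied to `x * m`, the cyclicity `re (m * y) = re (y * m)` forces `re x = 0`. -/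
theorem Quaternion.re_eq_zero_of_mul_eq_neg {m x : ℍ} (hm : m * m = -1)
    (hx : m * x = -(x * m)) : x.re = 0 := by
  have hcyc : (m * (x * m)).re = ((x * m) * m).re := by simp only [Quaternion.re_mul]; ring
  rw [← mul_assoc, hx, neg_mul, Quaternion.re_neg, mul_assoc, hm, mul_neg_one,
    Quaternion.re_neg] at hcyc
  linarith

theorem Quaternion.mul_eq_star_mul {m n c : ℍ} (hm : m * m = -1) (hn : n.re = 0)
    (hmn : m * n = -(n * m)) (hc : Commute m c) : n * c = star c * n := by
  have hre : (n * c).re = 0 := by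
    refine re_eq_zero_of_mul_eq_neg hm ?_
    rw [← mul_assoc, hmn, neg_mul, mul_assoc, hc.eq, mul_assoc]
  have h := Quaternion.star_eq_neg.mpr hre
  rw [star_mul, Quaternion.star_eq_neg.mpr hn, mul_neg, neg_inj] at h
  exact h.symm

/-- The `ℂ_m`-component of a quaternion in the splitting `ℍ = ℂ_m ⊕ ℂ_m n`. -/
def slicePart (m : ℍ) : ℍ →ₗ[ℝ] ℍ :=
  (2⁻¹ : ℝ) • (LinearMap.id - LinearMap.mulLeft ℝ m ∘ₗ LinearMap.mulRight ℝ m)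

theorem slicePart_apply (m c : ℍ) : slicePart m c = (2⁻¹ : ℝ) • (c - m * (c * m)) := rfl

theorem slicePart_of_commute {m c : ℍ} (hm : m * m = -1) (hc : Commute m c) :
    slicePart m c = c := by
  rw [slicePart_apply, ← mul_assoc, hc.eq, mul_assoc, hm, mul_neg_one, sub_neg_eq_add,
    ← two_smul ℝ, smul_smul]
  norm_num

theorem slicePart_eq_zero {m c : ℍ} (hm : m * m = -1) (hc : m * c = -(c * m)) :
    slicePart m c = 0 := by
  rw [slicePart_apply, ← mul_assoc, hc, neg_mul, mul_assoc, hm, mul_neg_one, neg_neg, sub_self,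
    smul_zero]

theorem slicePart_sub_slicePart_mul_mul {m n : ℍ} (hn : n * n = -1) (hmn : m * n = -(n * m))
    (c : ℍ) : slicePart m c - slicePart m (c * n) * n = c := by
  have hnmn : n * m * n = m := by
    rw [mul_assoc, hmn, mul_neg, ← mul_assoc, hn, neg_one_mul, neg_neg]
  have hsum : c - m * (c * m) - (c * n - m * (c * n * m)) * n = (2 : ℝ) • c := by
    calc c - m * (c * m) - (c * n - m * (c * n * m)) * n
        = c - m * (c * m) - c * (n * n) + m * c * (n * m * n) := by noncomm_ring
      _ = (2 : ℝ) • c := by rw [hn, hnmn, two_smul]; noncomm_ring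
  rw [slicePart_apply, slicePart_apply, smul_mul_assoc, ← smul_sub, hsum, smul_smul]
  norm_num

theorem eq_of_slicePart_eq {m n c d : ℍ} (hn : n * n = -1) (hmn : m * n = -(n * m))
    (h : slicePart m c = slicePart m d) (hmul : slicePart m (c * n) = slicePart m (d * n)) :
    c = d := by
  rw [← slicePart_sub_slicePart_mul_mul hn hmn c, h, hmul, slicePart_sub_slicePart_mul_mul hn hmn]

namespace QInner

variable {inn : H → H → ℍ}

theorem inner_neg_right (hinn : QInner inn) (u v : H) : inn u (-v) = -inn u v :=
  (AddMonoidHom.mk' (inn u) (hinn.add_right u)).map_neg v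

theorem inner_sub_right (hinn : QInner inn) (u v w : H) : inn u (v - w) = inn u v - inn u w :=
  (AddMonoidHom.mk' (inn u) (hinn.add_right u)).map_sub v w

theorem inner_neg_left (hinn : QInner inn) (u v : H) : inn (-u) v = -inn u v := by
  rw [hinn.conj_symm, inner_neg_right hinn, star_neg, ← hinn.conj_symm]

theorem inner_sub_left (hinn : QInner inn) (u v w : H) : inn (u - v) w = inn u w - inn v w := by
  rw [hinn.conj_symm, inner_sub_right hinn, star_sub, ← hinn.conj_symm, ← hinn.conj_symm]

theorem inner_smul_left (hinn : QInner inn) (u v : H) (q : ℍ) :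
    inn (op q • u) v = star q * inn u v := by
  rw [hinn.conj_symm, hinn.smul_right, star_mul, ← hinn.conj_symm]

end QInner

theorem innP_neg_right {inn : H → H → ℍ} (hinn : QInner inn) (p q : H × H) :
    innP inn p (-q) = -innP inn p q := by
  simp only [innP, Prod.fst_neg, Prod.snd_neg, hinn.inner_neg_right, neg_add]

theorem forall_apply_eq_iff_of_intertwine {α β : Type*} {s : Set α} {φ : α → β}
    (hinj : s.InjOn φ) (hsurj : ∀ b, ∃ a ∈ s, φ a = b) {F G : β → β} {f g : α → α}
    (hf : Set.MapsTo f s s) (hg : Set.MapsTo g s s)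
    (hF : ∀ a ∈ s, F (φ a) = φ (f a)) (hG : ∀ a ∈ s, G (φ a) = φ (g a)) :
    (∀ b, F b = G b) ↔ ∀ a ∈ s, f a = g a := by
  constructor
  · intro h a ha
    exact hinj (hf ha) (hg ha) (by rw [← hF a ha, ← hG a ha, h])
  · intro h b
    obtain ⟨a, ha, rfl⟩ := hsurj b
    rw [hF a ha, hG a ha, h a ha]

section Slice

variable {inn : H → H → ℍ} {J : H →L[ℍᵐᵒᵖ] H} {m n : ℍ} {cj : H → H}

theorem mem_Hplus {x : H} : x ∈ Hplus J m ↔ J x = op m • x := Iff.rfl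

theorem sub_mem_Hplus {x y : H} (hx : x ∈ Hplus J m) (hy : y ∈ Hplus J m) :
    x - y ∈ Hplus J m := by
  rw [sub_eq_add_neg]
  exact add_mem_Hplus hx (neg_mem_Hplus hy)

theorem SliceSetup.m_mul_self (hslice : SliceSetup inn J m n) : m * m = -1 :=
  Quaternion.mul_self_eq_neg_one_s13 hslice.m_im hslice.m_norm

theorem SliceSetup.n_mul_self (hslice : SliceSetup inn J m n) : n * n = -1 :=
  Quaternion.mul_self_eq_neg_one_s13 hslice.n_im hslice.n_norm

theorem SliceSetup.smul_n_smul_n (hslice : SliceSetup inn J m n) (x : H) :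
    op n • op n • x = -x := by
  rw [smul_smul, ← op_mul, hslice.n_mul_self, op_neg, op_one, neg_smul, one_smul]

/-- Anti self-adjointness of `J` makes `J x = x m` turn into `m ⟨x, y⟩ = ⟨x, y⟩ m`. -/
theorem commute_inner_of_mem_Hplus (hinn : QInner inn) (hslice : SliceSetup inn J m n)
    {x y : H} (hx : x ∈ Hplus J m) (hy : y ∈ Hplus J m) : Commute m (inn x y) := by
  have h := hslice.Jadj x y
  rw [neg_apply, mem_Hplus.mp hx, mem_Hplus.mp hy, hinn.inner_neg_left, hinn.inner_smul_left,
    hinn.smul_right, Quaternion.star_eq_neg.mpr hslice.m_im, neg_mul, neg_neg] at h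
  exact h

theorem IsSliceConj.injective (hcj : IsSliceConj inn J m cj) : Function.Injective cj :=
  Function.LeftInverse.injective hcj.invol

theorem IsSliceDecomp.neg {A : H →L[ℍᵐᵒᵖ] H} {A₁ A₂ : H → H}
    (hdec : IsSliceDecomp inn J m n cj A A₁ A₂) : IsSliceDecomp inn J m n cj (-A) (-A₁) (-A₂) where
  mem₁ x hx := neg_mem_Hplus (hdec.mem₁ x hx)
  mem₂ x hx := neg_mem_Hplus (hdec.mem₂ x hx)
  add₁ x y := by simp only [Pi.neg_apply, hdec.add₁, neg_add]
  add₂ x y := by simp only [Pi.neg_apply, hdec.add₂, neg_add]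
  lin₁ x := by simp only [Pi.neg_apply, hdec.lin₁, smul_neg]
  lin₂ x := by simp only [Pi.neg_apply, hdec.lin₂, smul_neg]
  decomp x hx := by
    simp only [neg_apply, Pi.neg_apply, hdec.decomp x hx, smul_neg, neg_add]

theorem chi_mem_Hplus2 (hcj : IsSliceConj inn J m cj) {A : H →L[ℍᵐᵒᵖ] H} {A₁ A₂ : H → H}
    (hdec : IsSliceDecomp inn J m n cj A A₁ A₂) {p : H × H} (hp : p ∈ Hplus2 J m) :
    chi cj A₁ A₂ p ∈ Hplus2 J m :=
  ⟨add_mem_Hplus (hdec.mem₁ _ hp.1) (hdec.mem₂ _ hp.2),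
    add_mem_Hplus (neg_mem_Hplus (hcj.mem _ (hdec.mem₂ _ (hcj.mem _ hp.1))))
      (hcj.mem _ (hdec.mem₁ _ (hcj.mem _ hp.2)))⟩

theorem chi_neg (hcj : IsSliceConj inn J m cj) (A₁ A₂ : H → H) (p : H × H) :
    chi cj (-A₁) (-A₂) p = -chi cj A₁ A₂ p := by
  simp only [chi, Pi.neg_apply, hcj.map_neg, Prod.neg_mk, neg_add]

def ofSlicePair (n : ℍ) (cj : H → H) (p : H × H) : H := p.1 - op n • cj p.2

theorem map_ofSlicePair (hslice : SliceSetup inn J m n) (hcj : IsSliceConj inn J m cj)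
    {A : H →L[ℍᵐᵒᵖ] H} {A₁ A₂ : H → H} (hdec : IsSliceDecomp inn J m n cj A A₁ A₂)
    {p : H × H} (hp : p ∈ Hplus2 J m) :
    A (ofSlicePair n cj p) = ofSlicePair n cj (chi cj A₁ A₂ p) := by
  simp only [ofSlicePair, chi, map_sub, map_smul, hdec.decomp _ hp.1,
    hdec.decomp _ (hcj.mem _ hp.2), hcj.add, hcj.map_neg, hcj.invol, smul_add, smul_neg,
    hslice.smul_n_smul_n]
  abel

theorem exists_ofSlicePair_eq (hslice : SliceSetup inn J m n) (hcj : IsSliceConj inn J m cj)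
    (x : H) : ∃ p ∈ Hplus2 J m, ofSlicePair n cj p = x := by
  obtain ⟨x₁, hx₁, x₂, hx₂, rfl⟩ := hslice.split x
  refine ⟨(x₁, -cj x₂), ⟨hx₁, neg_mem_Hplus (hcj.mem _ hx₂)⟩, ?_⟩
  simp only [ofSlicePair, hcj.map_neg, hcj.invol, smul_neg, sub_neg_eq_add]

theorem ofSlicePair_injOn (hslice : SliceSetup inn J m n) (hcj : IsSliceConj inn J m cj) :
    (Hplus2 J m).InjOn (ofSlicePair n cj) := by
  rintro ⟨p₁, p₂⟩ ⟨hp₁, hp₂⟩ ⟨q₁, q₂⟩ ⟨hq₁, hq₂⟩ h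
  have hdiff : (p₁ - q₁) + op n • (cj q₂ - cj p₂) = 0 := by
    rw [← sub_eq_zero.mpr h]
    simp only [ofSlicePair, smul_sub]
    abel
  obtain ⟨h₁, h₂⟩ := hslice.split_unique _ (sub_mem_Hplus hp₁ hq₁) _
    (sub_mem_Hplus (hcj.mem _ hq₂) (hcj.mem _ hp₂)) hdiff
  exact Prod.ext (sub_eq_zero.mp h₁) (hcj.injective (sub_eq_zero.mp h₂).symm)

/-- The cross terms lie in `ℂ_m n`, and `conj(n) ⟨x, y⟩ n = conj ⟨x, y⟩` for `x, y ∈ H₊`. -/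
theorem slicePart_inner_ofSlicePair (hinn : QInner inn) (hslice : SliceSetup inn J m n)
    (hcj : IsSliceConj inn J m cj) {p q : H × H} (hp : p ∈ Hplus2 J m) (hq : q ∈ Hplus2 J m) :
    slicePart m (inn (ofSlicePair n cj p) (ofSlicePair n cj q)) = innP inn p q := by
  have hm := hslice.m_mul_self
  have hcp := hcj.mem _ hp.2
  have hcq := hcj.mem _ hq.2
  have h₁₁ := commute_inner_of_mem_Hplus hinn hslice hp.1 hq.1
  have h₁₂ := commute_inner_of_mem_Hplus hinn hslice hp.1 hcq
  have h₂₁ := commute_inner_of_mem_Hplus hinn hslice hcp hq.1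
  have h₂₂ := commute_inner_of_mem_Hplus hinn hslice hcp hcq
  have hsn : star n = -n := Quaternion.star_eq_neg.mpr hslice.n_im
  have hswap₂₁ := Quaternion.mul_eq_star_mul hm hslice.n_im hslice.anticomm h₂₁
  have hswap₂₂ := Quaternion.mul_eq_star_mul hm hslice.n_im hslice.anticomm h₂₂
  have hcross₁ : slicePart m (inn p.1 (cj q.2) * n) = 0 := by
    refine slicePart_eq_zero hm ?_
    rw [← mul_assoc, h₁₂.eq, mul_assoc, hslice.anticomm, mul_neg, mul_assoc]
  have hcross₂ : slicePart m (star n * inn (cj p.2) q.1) = 0 := by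
    rw [hsn, neg_mul, hswap₂₁, map_neg, neg_eq_zero]
    refine slicePart_eq_zero hm ?_
    have h₂₁' : Commute m (star (inn (cj p.2) q.1)) := by
      simpa only [Quaternion.star_eq_neg.mpr hslice.m_im, Commute.neg_left_iff] using
        h₂₁.star_star
    rw [← mul_assoc, h₂₁'.eq, mul_assoc, hslice.anticomm, mul_neg, mul_assoc]
  have hdiag : star n * inn (cj p.2) (cj q.2) * n = inn p.2 q.2 := by
    rw [hsn, neg_mul, hswap₂₂, neg_mul, mul_assoc, hslice.n_mul_self, mul_neg_one, neg_neg,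
      ← hinn.conj_symm, hcj.inner _ hq.2 _ hp.2]
  simp only [ofSlicePair, hinn.inner_sub_left, hinn.inner_sub_right, hinn.inner_smul_left,
    hinn.smul_right, map_sub, hcross₁, hcross₂, hdiag, ← mul_assoc, innP,
    slicePart_of_commute hm h₁₁,
    slicePart_of_commute hm (commute_inner_of_mem_Hplus hinn hslice hp.2 hq.2)]
  abel

section Transfer

variable {B C : H →L[ℍᵐᵒᵖ] H} {B₁ B₂ C₁ C₂ : H → H}

theorem slicePart_inner_map_eq_iff (hinn : QInner inn) (hslice : SliceSetup inn J m n)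
    (hcj : IsSliceConj inn J m cj) (hdecB : IsSliceDecomp inn J m n cj B B₁ B₂)
    (hdecC : IsSliceDecomp inn J m n cj C C₁ C₂) :
    (∀ x y : H, slicePart m (inn (B x) y) = slicePart m (inn x (C y))) ↔
      ∀ p ∈ Hplus2 J m, ∀ q ∈ Hplus2 J m,
        innP inn (chi cj B₁ B₂ p) q = innP inn p (chi cj C₁ C₂ q) := by
  have hB : ∀ p ∈ Hplus2 J m, ∀ q ∈ Hplus2 J m, slicePart m
      (inn (B (ofSlicePair n cj p)) (ofSlicePair n cj q)) = innP inn (chi cj B₁ B₂ p) q :=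
    fun p hp q hq => by
      rw [map_ofSlicePair hslice hcj hdecB hp,
        slicePart_inner_ofSlicePair hinn hslice hcj (chi_mem_Hplus2 hcj hdecB hp) hq]
  have hC : ∀ p ∈ Hplus2 J m, ∀ q ∈ Hplus2 J m, slicePart m
      (inn (ofSlicePair n cj p) (C (ofSlicePair n cj q))) = innP inn p (chi cj C₁ C₂ q) :=
    fun p hp q hq => by
      rw [map_ofSlicePair hslice hcj hdecC hq,
        slicePart_inner_ofSlicePair hinn hslice hcj hp (chi_mem_Hplus2 hcj hdecC hq)]
  constructor
  · intro h p hp q hq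
    rw [← hB p hp q hq, ← hC p hp q hq, h]
  · intro h x y
    obtain ⟨p, hp, rfl⟩ := exists_ofSlicePair_eq hslice hcj x
    obtain ⟨q, hq, rfl⟩ := exists_ofSlicePair_eq hslice hcj y
    rw [hB p hp q hq, hC p hp q hq, h p hp q hq]

theorem inner_map_eq_iff_slicePart (hinn : QInner inn) (hslice : SliceSetup inn J m n) :
    (∀ x y : H, inn (B x) y = inn x (C y)) ↔
      ∀ x y : H, slicePart m (inn (B x) y) = slicePart m (inn x (C y)) := by
  refine ⟨fun h x y => by rw [h], fun h x y => ?_⟩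
  refine eq_of_slicePart_eq hslice.n_mul_self hslice.anticomm (h x y) ?_
  rw [← hinn.smul_right, ← hinn.smul_right, ← map_smul]
  exact h x (op n • y)

theorem inner_map_eq_iff_innP_chi (hinn : QInner inn) (hslice : SliceSetup inn J m n)
    (hcj : IsSliceConj inn J m cj) (hdecB : IsSliceDecomp inn J m n cj B B₁ B₂)
    (hdecC : IsSliceDecomp inn J m n cj C C₁ C₂) :
    (∀ x y : H, inn (B x) y = inn x (C y)) ↔
      ∀ p ∈ Hplus2 J m, ∀ q ∈ Hplus2 J m,
        innP inn (chi cj B₁ B₂ p) q = innP inn p (chi cj C₁ C₂ q) :=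
  (inner_map_eq_iff_slicePart hinn hslice).trans
    (slicePart_inner_map_eq_iff hinn hslice hcj hdecB hdecC)

theorem map_map_ofSlicePair (hslice : SliceSetup inn J m n) (hcj : IsSliceConj inn J m cj)
    (hdecB : IsSliceDecomp inn J m n cj B B₁ B₂) (hdecC : IsSliceDecomp inn J m n cj C C₁ C₂)
    {p : H × H} (hp : p ∈ Hplus2 J m) :
    B (C (ofSlicePair n cj p)) = ofSlicePair n cj (chi cj B₁ B₂ (chi cj C₁ C₂ p)) := by
  rw [map_ofSlicePair hslice hcj hdecC hp,
    map_ofSlicePair hslice hcj hdecB (chi_mem_Hplus2 hcj hdecC hp)]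

theorem comp_eq_comp_iff_chi (hslice : SliceSetup inn J m n) (hcj : IsSliceConj inn J m cj)
    (hdecB : IsSliceDecomp inn J m n cj B B₁ B₂) (hdecC : IsSliceDecomp inn J m n cj C C₁ C₂) :
    B.comp C = C.comp B ↔
      ∀ p ∈ Hplus2 J m, chi cj B₁ B₂ (chi cj C₁ C₂ p) = chi cj C₁ C₂ (chi cj B₁ B₂ p) :=
  ContinuousLinearMap.ext_iff.trans <|
    forall_apply_eq_iff_of_intertwine (ofSlicePair_injOn hslice hcj)
      (exists_ofSlicePair_eq hslice hcj)
      (fun _ hp => chi_mem_Hplus2 hcj hdecB (chi_mem_Hplus2 hcj hdecC hp))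
      (fun _ hp => chi_mem_Hplus2 hcj hdecC (chi_mem_Hplus2 hcj hdecB hp))
      (fun _ hp => map_map_ofSlicePair hslice hcj hdecB hdecC hp)
      (fun _ hp => map_map_ofSlicePair hslice hcj hdecC hdecB hp)

theorem comp_eq_one_iff_chi (hslice : SliceSetup inn J m n) (hcj : IsSliceConj inn J m cj)
    (hdecB : IsSliceDecomp inn J m n cj B B₁ B₂) (hdecC : IsSliceDecomp inn J m n cj C C₁ C₂) :
    B.comp C = 1 ↔ ∀ p ∈ Hplus2 J m, chi cj B₁ B₂ (chi cj C₁ C₂ p) = p :=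
  ContinuousLinearMap.ext_iff.trans <|
    forall_apply_eq_iff_of_intertwine (ofSlicePair_injOn hslice hcj)
      (exists_ofSlicePair_eq hslice hcj)
      (fun _ hp => chi_mem_Hplus2 hcj hdecB (chi_mem_Hplus2 hcj hdecC hp)) (fun _ hp => hp)
      (fun _ hp => map_map_ofSlicePair hslice hcj hdecB hdecC hp) (fun _ _ => rfl)

end Transfer

/-- For self-adjoint `A` the value `⟨x, A x⟩` is real, hence equal to its `ℂ_m`-part. -/
theorem inner_ofSlicePair_map_self (hinn : QInner inn) (hslice : SliceSetup inn J m n)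
    (hcj : IsSliceConj inn J m cj) {A : H →L[ℍᵐᵒᵖ] H} {A₁ A₂ : H → H}
    (hdec : IsSliceDecomp inn J m n cj A A₁ A₂) (hA : IsAdjB inn A A)
    {p : H × H} (hp : p ∈ Hplus2 J m) :
    inn (ofSlicePair n cj p) (A (ofSlicePair n cj p)) = innP inn p (chi cj A₁ A₂ p) := by
  set x := ofSlicePair n cj p
  have hreal : inn x (A x) = ((inn x (A x)).re : ℍ) := by
    rw [← Quaternion.star_eq_self, ← hinn.conj_symm, hA]
  have hcomm : Commute m (inn x (A x)) := by
    rw [hreal]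
    exact (Quaternion.coe_commutes _ m).symm
  rw [← slicePart_of_commute hslice.m_mul_self hcomm, map_ofSlicePair hslice hcj hdec hp,
    slicePart_inner_ofSlicePair hinn hslice hcj hp (chi_mem_Hplus2 hcj hdec hp)]

theorem isPosB_iff_chi (hinn : QInner inn) (hslice : SliceSetup inn J m n)
    (hcj : IsSliceConj inn J m cj) {A : H →L[ℍᵐᵒᵖ] H} {A₁ A₂ : H → H}
    (hdec : IsSliceDecomp inn J m n cj A A₁ A₂) :
    IsPosB inn A ↔
      ((∀ p ∈ Hplus2 J m, ∀ q ∈ Hplus2 J m,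
          innP inn (chi cj A₁ A₂ p) q = innP inn p (chi cj A₁ A₂ q)) ∧
        ∀ p ∈ Hplus2 J m, ∃ r : ℝ, 0 ≤ r ∧ innP inn p (chi cj A₁ A₂ p) = (r : ℍ)) := by
  rw [IsPosB, IsAdjB, inner_map_eq_iff_innP_chi hinn hslice hcj hdec hdec]
  refine and_congr_right fun hχ => ?_
  have hA : IsAdjB inn A A := (inner_map_eq_iff_innP_chi hinn hslice hcj hdec hdec).mpr hχ
  constructor
  · intro h p hp
    rw [← inner_ofSlicePair_map_self hinn hslice hcj hdec hA hp]
    exact h _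
  · intro h x
    obtain ⟨p, hp, rfl⟩ := exists_ofSlicePair_eq hslice hcj x
    rw [inner_ofSlicePair_map_self hinn hslice hcj hdec hA hp]
    exact h p hp

end Slice

theorem chi_adjoint_and_equivalences_general
    (inn : H → H → ℍ) (hinn : QInner inn)
    (J : H →L[ℍᵐᵒᵖ] H) (m n : ℍ) (hslice : SliceSetup inn J m n)
    (cj : H → H) (hcj : IsSliceConj inn J m cj)
    (A As : H →L[ℍᵐᵒᵖ] H) (A₁ A₂ As₁ As₂ : H → H)
    (hadj : IsAdjB inn A As)
    (hdecA : IsSliceDecomp inn J m n cj A A₁ A₂)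
    (hdecAs : IsSliceDecomp inn J m n cj As As₁ As₂) :
    -- `χ_{A*} = (χ_A)*`
    (∀ p ∈ Hplus2 J m, ∀ q ∈ Hplus2 J m,
      innP inn (chi cj As₁ As₂ p) q = innP inn p (chi cj A₁ A₂ q)) ∧
    -- self-adjoint
    ((∀ x y : H, inn (A x) y = inn x (A y)) ↔
      ∀ p ∈ Hplus2 J m, ∀ q ∈ Hplus2 J m,
        innP inn (chi cj A₁ A₂ p) q = innP inn p (chi cj A₁ A₂ q)) ∧
    -- positive
    (IsPosB inn A ↔
      ((∀ p ∈ Hplus2 J m, ∀ q ∈ Hplus2 J m,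
          innP inn (chi cj A₁ A₂ p) q = innP inn p (chi cj A₁ A₂ q)) ∧
        ∀ p ∈ Hplus2 J m, ∃ r : ℝ, 0 ≤ r ∧ innP inn p (chi cj A₁ A₂ p) = (r : ℍ))) ∧
    -- normal
    (A.comp As = As.comp A ↔
      ∀ p ∈ Hplus2 J m,
        chi cj A₁ A₂ (chi cj As₁ As₂ p) = chi cj As₁ As₂ (chi cj A₁ A₂ p)) ∧
    -- unitary
    ((A.comp As = 1 ∧ As.comp A = 1) ↔
      ∀ p ∈ Hplus2 J m,
        chi cj A₁ A₂ (chi cj As₁ As₂ p) = p ∧ chi cj As₁ As₂ (chi cj A₁ A₂ p) = p) ∧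
    -- anti self-adjoint
    ((∀ x y : H, inn (A x) y = -(inn x (A y))) ↔
      ∀ p ∈ Hplus2 J m, ∀ q ∈ Hplus2 J m,
        innP inn (chi cj A₁ A₂ p) q = -(innP inn p (chi cj A₁ A₂ q))) := by
  refine ⟨(inner_map_eq_iff_innP_chi hinn hslice hcj hdecAs hdecA).mp hadj,
    inner_map_eq_iff_innP_chi hinn hslice hcj hdecA hdecA,
    isPosB_iff_chi hinn hslice hcj hdecA,
    comp_eq_comp_iff_chi hslice hcj hdecA hdecAs, ?_, ?_⟩
  · rw [comp_eq_one_iff_chi hslice hcj hdecA hdecAs, comp_eq_one_iff_chi hslice hcj hdecAs hdecA,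
      forall₂_and]
  · simpa only [neg_apply, hinn.inner_neg_right, chi_neg hcj, innP_neg_right hinn] using
      inner_map_eq_iff_innP_chi hinn hslice hcj hdecA hdecA.neg

/-- `χ_{A*} = (χ_A)*` with respect to the `ℂ_m`-inner product `innP` on
`H₊ ⊕ H₊`; consequently `A` is self-adjoint (resp. positive, normal, unitary, anti
self-adjoint) if and only if `χ_A` is. Here `As = A*`. -/
theorem chi_adjoint_and_equivalences
    [CompleteSpace H] (inn : H → H → ℍ) (hinn : QInner inn)
    (J : H →L[ℍᵐᵒᵖ] H) (m n : ℍ) (hslice : SliceSetup inn J m n)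
    (cj : H → H) (hcj : IsSliceConj inn J m cj)
    (A As : H →L[ℍᵐᵒᵖ] H) (A₁ A₂ As₁ As₂ : H → H)
    (hadj : IsAdjB inn A As)
    (hdecA : IsSliceDecomp inn J m n cj A A₁ A₂)
    (hdecAs : IsSliceDecomp inn J m n cj As As₁ As₂) :
    -- `χ_{A*} = (χ_A)*`
    (∀ p ∈ Hplus2 J m, ∀ q ∈ Hplus2 J m,
      innP inn (chi cj As₁ As₂ p) q = innP inn p (chi cj A₁ A₂ q)) ∧
    -- self-adjoint
    ((∀ x y : H, inn (A x) y = inn x (A y)) ↔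
      ∀ p ∈ Hplus2 J m, ∀ q ∈ Hplus2 J m,
        innP inn (chi cj A₁ A₂ p) q = innP inn p (chi cj A₁ A₂ q)) ∧
    -- positive
    (IsPosB inn A ↔
      ((∀ p ∈ Hplus2 J m, ∀ q ∈ Hplus2 J m,
          innP inn (chi cj A₁ A₂ p) q = innP inn p (chi cj A₁ A₂ q)) ∧
        ∀ p ∈ Hplus2 J m, ∃ r : ℝ, 0 ≤ r ∧ innP inn p (chi cj A₁ A₂ p) = (r : ℍ))) ∧
    -- normal
    (A.comp As = As.comp A ↔
      ∀ p ∈ Hplus2 J m,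
        chi cj A₁ A₂ (chi cj As₁ As₂ p) = chi cj As₁ As₂ (chi cj A₁ A₂ p)) ∧
    -- unitary
    ((A.comp As = 1 ∧ As.comp A = 1) ↔
      ∀ p ∈ Hplus2 J m,
        chi cj A₁ A₂ (chi cj As₁ As₂ p) = p ∧ chi cj As₁ As₂ (chi cj A₁ A₂ p) = p) ∧
    -- anti self-adjoint
    ((∀ x y : H, inn (A x) y = -(inn x (A y))) ↔
      ∀ p ∈ Hplus2 J m, ∀ q ∈ Hplus2 J m,
        innP inn (chi cj A₁ A₂ p) q = -(innP inn p (chi cj A₁ A₂ q))) :=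
  chi_adjoint_and_equivalences_general inn hinn J m n hslice cj hcj A As A₁ A₂ As₁ As₂ hadj hdecA
    hdecAs
end
end
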